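/- arXiv:2110.00040 — 2 statements merged into one kernel-verified Lean document; each statement's English description precedes it below -/
import Mathlib

section
/- Let g : ℝ⁺ → ℝ⁺ satisfy g(n+1)/g(n) → l as n → ∞ with l ≥ 1, and let f : ℝ⁺ → ℝ⁺ be eventually log-concave with f(x+1) = g(x) f(x) for all x > 0. Then f(x)/f(1) = l^{(x²+x)/2} · lim_{n→∞} [g(n)⋯g(1) g(n)^x] / [g(n+x)⋯g(x)] for all x > 0. -/
open Filter Finset Real

noncomputable def gammaTypeSeq (g : ℝ → ℝ) (x : ℝ) (n : ℕ) : ℝ :=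
  ((∏ k ∈ Finset.Icc 1 n, g k) * g n ^ x) / ∏ k ∈ Finset.range (n + 1), g (x + k)

/-!
By the functional equation, `log g t = log f (t + 1) - log f t` is a unit slope of the concave
function `log f`. Monotonicity of slopes makes these eventually nonincreasing, so
`g (n + 1) / g n ≤ 1` eventually and `l = 1`. The same monotonicity, applied to the slopes over
`[n, n + 1]`, `[n + 1, n + 1 + x]` and `[n + 1 + ⌊x⌋, n + 2 + ⌊x⌋]`, squeezes
`E n = log f (n + 1 + x) - log f (n + 1) - x log g n` between `x (log g (n + 1 + ⌊x⌋) - log g n)`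
and `0`; the lower bound tends to `0` since `log g (n + 1) - log g n → log l = 0`. Finally
`gammaTypeSeq g x n` telescopes to `f x / f 1 * exp (-E n)`.
-/

open Topology

theorem ConcaveOn.slope_le_slope_of_le {𝕜 : Type*} [Field 𝕜] [LinearOrder 𝕜]
    [IsStrictOrderedRing 𝕜] {s : Set 𝕜} {f : 𝕜 → 𝕜} (hf : ConcaveOn 𝕜 s f) {a b c d : 𝕜}
    (ha : a ∈ s) (hd : d ∈ s) (hab : a < b) (hcd : c < d) (hac : a ≤ c) (hbd : b ≤ d) :
    slope f c d ≤ slope f a b := by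
  have had : a < d := hab.trans_le hbd
  have hmem : ∀ y ∈ Set.Icc a d, y ∈ s := fun y hy => hf.1.ordConnected.out ha hd hy
  calc slope f c d = slope f d c := slope_comm _ _ _
    _ ≤ slope f d a := hf.slope_anti hd ⟨ha, had.ne⟩ ⟨hmem c ⟨hac, hcd.le⟩, hcd.ne⟩ hac
    _ = slope f a d := slope_comm _ _ _
    _ ≤ slope f a b := hf.slope_anti ha ⟨hmem b ⟨hab.le, hbd⟩, hab.ne'⟩ ⟨hd, had.ne'⟩ hbd

section ConcaveIncrements

variable {φ : ℝ → ℝ} {M t : ℝ}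

theorem ConcaveOn.sub_add_one_le_sub (hφ : ConcaveOn ℝ (Set.Ioi M) φ) (ht : M < t) :
    φ (t + 2) - φ (t + 1) ≤ φ (t + 1) - φ t := by
  have h := hφ.slope_le_slope_of_le (a := t) (b := t + 1) (c := t + 1) (d := t + 2) ht
    (show M < t + 2 by linarith) (by linarith) (by linarith) (by linarith) (by linarith)
  rwa [slope_def_field, slope_def_field, show t + 2 - (t + 1) = 1 by ring, add_sub_cancel_left,
    div_one, div_one] at h

theorem ConcaveOn.sub_le_mul_sub (hφ : ConcaveOn ℝ (Set.Ioi M) φ) (ht : M < t) {x : ℝ}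
    (hx : 0 < x) : φ (t + 1 + x) - φ (t + 1) ≤ x * (φ (t + 1) - φ t) := by
  have h := hφ.slope_le_slope_of_le (a := t) (b := t + 1) (c := t + 1) (d := t + 1 + x) ht
    (show M < t + 1 + x by linarith) (by linarith) (by linarith) (by linarith) (by linarith)
  rw [slope_def_field, slope_def_field, add_sub_cancel_left, add_sub_cancel_left, div_one,
    div_le_iff₀ hx] at h
  linarith

theorem ConcaveOn.mul_sub_le_sub (hφ : ConcaveOn ℝ (Set.Ioi M) φ) (ht : M < t) {k x : ℝ}
    (hk : 0 ≤ k) (hx : 0 < x) (hxk : x ≤ k + 1) :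
    x * (φ (t + k + 1) - φ (t + k)) ≤ φ (t + x) - φ t := by
  have h := hφ.slope_le_slope_of_le (a := t) (b := t + x) (c := t + k) (d := t + k + 1) ht
    (show M < t + k + 1 by linarith) (by linarith) (by linarith) (by linarith) (by linarith)
  rw [slope_def_field, slope_def_field, add_sub_cancel_left, add_sub_cancel_left, div_one,
    le_div_iff₀ hx] at h
  linarith

end ConcaveIncrements

theorem tendsto_sub_add_of_tendsto_sub_succ {G : Type*} [AddCommGroup G] [TopologicalSpace G]
    [IsTopologicalAddGroup G] {u : ℕ → G} (h : Tendsto (fun n => u (n + 1) - u n) atTop (𝓝 0))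
    (j : ℕ) : Tendsto (fun n => u (n + j) - u n) atTop (𝓝 0) := by
  induction j with
  | zero => simpa using tendsto_const_nhds
  | succ j ih =>
    have hsum := (h.comp (tendsto_add_atTop_nat j)).add ih
    rw [add_zero] at hsum
    refine hsum.congr fun n => ?_
    simp only [Function.comp_apply, ← add_assoc]
    abel

section FunctionalEquation

variable {g f : ℝ → ℝ}

theorem apply_add_natCast_eq_mul_prod (hfe : ∀ x > 0, f (x + 1) = g x * f x) {x : ℝ}
    (hx : 0 < x) (n : ℕ) : f (x + n) = f x * ∏ k ∈ range n, g (x + k) := by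
  induction n with
  | zero => simp
  | succ n ih =>
    rw [Nat.cast_succ, ← add_assoc, hfe _ (by positivity), ih, prod_range_succ]
    ring

theorem gammaTypeSeq_eq_div_mul (hf : ∀ x > 0, 0 < f x) (hfe : ∀ x > 0, f (x + 1) = g x * f x)
    {x : ℝ} (hx : 0 < x) (n : ℕ) :
    gammaTypeSeq g x n = f x / f 1 * (f (n + 1) * g n ^ x / f (n + 1 + x)) := by
  have hIcc : ∏ k ∈ Icc 1 n, g k = f (n + 1) / f 1 := by
    rw [← Ico_add_one_right_eq_Icc, prod_Ico_eq_prod_range, Nat.add_sub_cancel, add_comm _ 1,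
      apply_add_natCast_eq_mul_prod hfe one_pos, mul_div_cancel_left₀ _ (hf 1 one_pos).ne']
    push_cast
    rfl
  have hrange : ∏ k ∈ range (n + 1), g (x + k) = f (n + 1 + x) / f x := by
    rw [show (n + 1 + x : ℝ) = x + (n + 1 : ℕ) by push_cast; ring,
      apply_add_natCast_eq_mul_prod hfe hx, mul_div_cancel_left₀ _ (hf x hx).ne']
  have hf1 := hf 1 one_pos
  have hfx := hf x hx
  have hfnx := hf (n + 1 + x) (by positivity)
  rw [gammaTypeSeq, hIcc, hrange]
  field_simp

theorem log_eq_log_sub_log (hg : ∀ x > 0, 0 < g x) (hf : ∀ x > 0, 0 < f x)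
    (hfe : ∀ x > 0, f (x + 1) = g x * f x) {t : ℝ} (ht : 0 < t) :
    log (g t) = log (f (t + 1)) - log (f t) := by
  rw [hfe t ht, log_mul (hg t ht).ne' (hf t ht).ne']
  ring

end FunctionalEquation

section LogConcave

variable {g f : ℝ → ℝ} {M : ℝ}

theorem eventually_div_le_one (hg : ∀ x > 0, 0 < g x)
    (hinc : ∀ t > 0, log (g t) = log (f (t + 1)) - log (f t))
    (hconc : ConcaveOn ℝ (Set.Ioi M) (fun x => log (f x))) :
    ∀ᶠ n : ℕ in atTop, g (n + 1) / g n ≤ 1 := by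
  filter_upwards [tendsto_natCast_atTop_atTop.eventually_gt_atTop (max M 0)] with n hn
  have hn0 : 0 < (n : ℝ) := (le_max_right M 0).trans_lt hn
  have hle := hconc.sub_add_one_le_sub ((le_max_left M 0).trans_lt hn)
  rw [show (n : ℝ) + 2 = n + 1 + 1 by ring, ← hinc _ (by positivity), ← hinc _ hn0,
    log_le_log_iff (hg _ (by positivity)) (hg _ hn0)] at hle
  exact div_le_one_of_le₀ hle (hg _ hn0).le

theorem tendsto_log_sub_log_sub_mul_log
    (hinc : ∀ t > 0, log (g t) = log (f (t + 1)) - log (f t))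
    (hconc : ConcaveOn ℝ (Set.Ioi M) (fun x => log (f x)))
    (hsucc : Tendsto (fun n : ℕ => log (g (n + 1)) - log (g n)) atTop (𝓝 0))
    {x : ℝ} (hx : 0 < x) :
    Tendsto (fun n : ℕ => log (f (n + 1 + x)) - log (f (n + 1)) - x * log (g n))
      atTop (𝓝 0) := by
  set k := ⌊x⌋₊
  have hlower : Tendsto (fun n : ℕ => x * (log (g ↑(n + (k + 1))) - log (g n)))
      atTop (𝓝 0) := by
    simpa using ((tendsto_sub_add_of_tendsto_sub_succ (u := fun n : ℕ => log (g n))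
      (by simpa using hsucc) (k + 1)).const_mul x)
  have hlarge : ∀ᶠ n : ℕ in atTop, max M 0 < n :=
    tendsto_natCast_atTop_atTop.eventually_gt_atTop _
  refine tendsto_of_tendsto_of_tendsto_of_le_of_le' hlower tendsto_const_nhds ?_ ?_
  · filter_upwards [hlarge] with n hn
    have hle := hconc.mul_sub_le_sub (t := n + 1) (by linarith [le_max_left M 0])
      k.cast_nonneg hx (Nat.lt_floor_add_one x).le
    rw [← hinc _ (by positivity)] at hle
    rw [show ((n + (k + 1) : ℕ) : ℝ) = n + 1 + k by push_cast; ring]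
    linarith
  · filter_upwards [hlarge] with n hn
    have hle := hconc.sub_le_mul_sub ((le_max_left M 0).trans_lt hn) hx
    rw [← hinc n ((le_max_right M 0).trans_lt hn)] at hle
    linarith

theorem tendsto_mul_rpow_div (hg : ∀ x > 0, 0 < g x) (hf : ∀ x > 0, 0 < f x) {x : ℝ}
    (hx : 0 < x)
    (hlog : Tendsto (fun n : ℕ => log (f (n + 1 + x)) - log (f (n + 1)) - x * log (g n))
      atTop (𝓝 0)) :
    Tendsto (fun n : ℕ => f (n + 1) * g n ^ x / f (n + 1 + x)) atTop (𝓝 1) := by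
  have hexp := hlog.neg.rexp
  rw [neg_zero, exp_zero] at hexp
  refine hexp.congr' ?_
  filter_upwards [eventually_gt_atTop 0] with n hn
  have hratio : f (n + 1) * g n ^ x / f (n + 1 + x) =
      exp (log (f (n + 1)) + x * log (g n) - log (f (n + 1 + x))) := by
    rw [exp_sub, exp_add, exp_log (hf _ (by positivity)), exp_log (hf _ (by positivity)),
      rpow_def_of_pos (hg _ (by positivity)), mul_comm x]
  rw [hratio]
  ring_nf

end LogConcave

theorem webster_generalized_logConcave (g f : ℝ → ℝ) (l : ℝ)
    (hg : ∀ x > 0, 0 < g x) (hf : ∀ x > 0, 0 < f x)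
    (hl : 1 ≤ l)
    (hseq : Tendsto (fun n : ℕ => g ((n : ℝ) + 1) / g n) atTop (nhds l))
    (hconc : ∃ M : ℝ, ConcaveOn ℝ (Set.Ioi M) (fun x => Real.log (f x)))
    (hfe : ∀ x > 0, f (x + 1) = g x * f x) :
    ∀ x > 0, Tendsto (fun n : ℕ => l ^ ((x ^ 2 + x) / 2) * gammaTypeSeq g x n)
      atTop (nhds (f x / f 1)) := by
  obtain ⟨M, hM⟩ := hconc
  have hinc (t : ℝ) (ht : 0 < t) : log (g t) = log (f (t + 1)) - log (f t) :=
    log_eq_log_sub_log hg hf hfe ht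
  obtain rfl : l = 1 := le_antisymm (le_of_tendsto hseq (eventually_div_le_one hg hinc hM)) hl
  have hsucc : Tendsto (fun n : ℕ => log (g (n + 1)) - log (g n)) atTop (𝓝 0) := by
    have hlog := hseq.log one_ne_zero
    rw [log_one] at hlog
    refine hlog.congr' ?_
    filter_upwards [eventually_gt_atTop 0] with n hn
    exact log_div (hg _ (by positivity)).ne' (hg _ (by positivity)).ne'
  intro x hx
  have hlim := (tendsto_mul_rpow_div hg hf hx
    (tendsto_log_sub_log_sub_mul_log hinc hM hsucc hx)).const_mul (f x / f 1)
  rw [mul_one] at hlim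
  refine hlim.congr fun n => ?_
  rw [one_rpow, one_mul, gammaTypeSeq_eq_div_mul hf hfe hx]
end

section
/- Let g : ℝ⁺ → ℝ⁺ satisfy g(n+1)/g(n) → 1 as the positive integer n → ∞. If f : ℝ⁺ → ℝ⁺ satisfies f(x+1) = g(x) f(x), f(1) = 1, and f is eventually log-convex of order two, then for each x > 0, f(x) ≤ liminf_{n→∞} [g(n)⋯g(1) g(n)^x] / [g(n+x)⋯g(x)]. -/
open Filter Finset Real

/-- Divided difference of `h` at the points `x 0, …, x (m-1)` (assumed pairwise distinct),
via the Lagrange formula. -/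
noncomputable def divDiff (h : ℝ → ℝ) {m : ℕ} (x : Fin m → ℝ) : ℝ :=
  ∑ i, h (x i) / ∏ j ∈ Finset.univ.erase i, (x i - x j)

/-- `h` is convex of order `n` on `I` : all divided differences at `n+2` increasing
points of `I` are nonnegative. -/
def NConvexOn (n : ℕ) (I : Set ℝ) (h : ℝ → ℝ) : Prop :=
  ∀ x : Fin (n + 2) → ℝ, StrictMono x → (∀ i, x i ∈ I) → 0 ≤ divDiff h x

/-- `h` is concave of order `n` on `I` if `-h` is convex of order `n` on `I`. -/
def NConcaveOn (n : ℕ) (I : Set ℝ) (h : ℝ → ℝ) : Prop :=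
  NConvexOn n I (fun t => -h t)

open scoped Topology

/-!
Put `H = log f` and `L = log g`, so that `H (t + 1) = L t + H t`. Up to the factor `f x`,
`gammaTypeSeq g x n` is `exp (-D x n)` with `D y n = H (y + n + 1) - H (n + 1) - y L n`, so it
suffices to show `D y n → 0`. The shift `y ↦ y + 1` changes `D` only by a multiple of
`L (n + 1) - L n`, which tends to `0`; this reduces the claim to `0 < y ≤ 1`. There, the
nonnegative third divided differences of `H` at `n, n+1, n+1+y, n+2` and at `n, n+1, n+2, n+2+y`
squeeze `D y n` between `y (1 + y) / 2` times consecutive values of `L (n + 1) - L n`.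
-/

theorem divDiff_fin_four (h : ℝ → ℝ) (a b c d : ℝ) :
    divDiff h ![a, b, c, d] = h a / ((a - b) * ((a - c) * (a - d)))
      + h b / ((b - a) * ((b - c) * (b - d))) + h c / ((c - a) * ((c - b) * (c - d)))
      + h d / ((d - a) * ((d - b) * (d - c))) := by
  have e0 : univ.erase (0 : Fin 4) = {1, 2, 3} := by decide
  have e1 : univ.erase (1 : Fin 4) = {0, 2, 3} := by decide
  have e2 : univ.erase (2 : Fin 4) = {0, 1, 3} := by decide
  have e3 : univ.erase (3 : Fin 4) = {0, 1, 2} := by decide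
  simp [divDiff, Fin.sum_univ_four, e0, e1, e2, e3]

theorem strictMono_vec_four {a b c d : ℝ} (hab : a < b) (hbc : b < c) (hcd : c < d) :
    StrictMono ![a, b, c, d] := by
  intro i j hij
  fin_cases i <;> fin_cases j <;> simp_all <;> linarith

namespace NConvexOn

variable {H : ℝ → ℝ} {M p y : ℝ}

theorem divDiff_four_nonneg (hH : NConvexOn 2 (Set.Ioi M) H) {a b c d : ℝ} (ha : M < a)
    (hab : a < b) (hbc : b < c) (hcd : c < d) : 0 ≤ divDiff H ![a, b, c, d] := by
  refine hH _ (strictMono_vec_four hab hbc hcd) fun i => ?_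
  fin_cases i <;> simp <;> linarith

theorem sub_sub_mul_le (hH : NConvexOn 2 (Set.Ioi M) H) (hp : M < p) (hy0 : 0 < y)
    (hy1 : y < 1) :
    H (p + 1 + y) - H (p + 1) - y * (H (p + 1) - H p)
      ≤ y * (1 + y) / 2 * (H (p + 2) - 2 * H (p + 1) + H p) := by
  have h := hH.divDiff_four_nonneg hp (a := p) (b := p + 1) (c := p + 1 + y) (d := p + 2)
    (by linarith) (by linarith) (by linarith)
  have hy1' : 0 < 1 - y := by linarith
  have hscale : 0 < 2 * y * (1 - y) * (1 + y) := by positivity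
  have key : 2 * y * (1 - y) * (1 + y) * divDiff H ![p, p + 1, p + 1 + y, p + 2]
      = -(y * (1 - y)) * H p + 2 * (1 - y) * (1 + y) * H (p + 1) - 2 * H (p + 1 + y)
        + y * (1 + y) * H (p + 2) := by
    rw [divDiff_fin_four,
      show (p - (p + 1)) * ((p - (p + 1 + y)) * (p - (p + 2))) = -(2 * (1 + y)) by ring,
      show (p + 1 - p) * ((p + 1 - (p + 1 + y)) * (p + 1 - (p + 2))) = y by ring,
      show (p + 1 + y - p) * ((p + 1 + y - (p + 1)) * (p + 1 + y - (p + 2)))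
        = -((1 + y) * (y * (1 - y))) by ring,
      show (p + 2 - p) * ((p + 2 - (p + 1)) * (p + 2 - (p + 1 + y))) = 2 * (1 - y) by ring]
    field_simp
    ring
  linarith [mul_nonneg hscale.le h]

theorem le_sub_sub_mul (hH : NConvexOn 2 (Set.Ioi M) H) (hp : M < p) (hy0 : 0 < y) :
    y * (1 + y) / 2 * (H (p + 2) - 2 * H (p + 1) + H p)
      ≤ H (p + 2 + y) - H (p + 2) - y * (H (p + 2) - H (p + 1)) := by
  have h := hH.divDiff_four_nonneg hp (a := p) (b := p + 1) (c := p + 2) (d := p + 2 + y)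
    (by linarith) (by linarith) (by linarith)
  have hscale : 0 < 2 * y * (1 + y) * (2 + y) := by positivity
  have key : 2 * y * (1 + y) * (2 + y) * divDiff H ![p, p + 1, p + 2, p + 2 + y]
      = -(y * (1 + y)) * H p + 2 * y * (2 + y) * H (p + 1) - (1 + y) * (2 + y) * H (p + 2)
        + 2 * H (p + 2 + y) := by
    rw [divDiff_fin_four,
      show (p - (p + 1)) * ((p - (p + 2)) * (p - (p + 2 + y))) = -(2 * (2 + y)) by ring,
      show (p + 1 - p) * ((p + 1 - (p + 2)) * (p + 1 - (p + 2 + y))) = 1 + y by ring,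
      show (p + 2 - p) * ((p + 2 - (p + 1)) * (p + 2 - (p + 2 + y))) = -(2 * y) by ring,
      show (p + 2 + y - p) * ((p + 2 + y - (p + 1)) * (p + 2 + y - (p + 2)))
        = (2 + y) * ((1 + y) * y) by ring]
    field_simp
    ring
  linarith [mul_nonneg hscale.le h]

end NConvexOn

/-- With `H = log ∘ f` and `L = log ∘ g`, this is `-log (gammaTypeSeq g y n / f y)` for `n ≥ 1`. -/
def shiftDefect (H L : ℝ → ℝ) (y : ℝ) (n : ℕ) : ℝ :=
  H (y + n + 1) - H (n + 1) - y * L n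

section shiftDefect

variable {H L : ℝ → ℝ} {M : ℝ}

theorem shiftDefect_one (hHL : ∀ t > 0, H (t + 1) = L t + H t) (n : ℕ) :
    shiftDefect H L 1 n = L (n + 1) - L n := by
  rw [shiftDefect, add_comm (1 : ℝ), hHL _ (by positivity)]
  ring

theorem shiftDefect_add_one (hHL : ∀ t > 0, H (t + 1) = L t + H t) (y : ℝ) (n : ℕ) :
    shiftDefect H L (y + 1) n = shiftDefect H L y (n + 1) + (y + 1) * (L (n + 1) - L n) := by
  simp only [shiftDefect, Nat.cast_succ]
  rw [show y + 1 + n + 1 = y + (n + 1) + 1 by ring, hHL (n + 1) (by positivity)]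
  ring

theorem shiftDefect_le (hHL : ∀ t > 0, H (t + 1) = L t + H t) (hH : NConvexOn 2 (Set.Ioi M) H)
    {n : ℕ} (hn : 0 < n) (hMn : M < n) {y : ℝ} (hy0 : 0 < y) (hy1 : y < 1) :
    shiftDefect H L y n ≤ y * (1 + y) / 2 * (L (n + 1) - L n) := by
  have h := hH.sub_sub_mul_le hMn hy0 hy1
  rw [show (n : ℝ) + 2 = n + 1 + 1 by ring, hHL (n + 1) (by positivity),
    hHL n (by exact_mod_cast hn)] at h
  rw [shiftDefect, show y + n + 1 = n + 1 + y by ring, hHL n (by exact_mod_cast hn)]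
  linarith

theorem le_shiftDefect_succ (hHL : ∀ t > 0, H (t + 1) = L t + H t)
    (hH : NConvexOn 2 (Set.Ioi M) H) {n : ℕ} (hn : 0 < n) (hMn : M < n) {y : ℝ} (hy0 : 0 < y) :
    y * (1 + y) / 2 * (L (n + 1) - L n) ≤ shiftDefect H L y (n + 1) := by
  have h := hH.le_sub_sub_mul hMn hy0
  rw [show (n : ℝ) + 2 + y = y + (n + 1) + 1 by ring, show (n : ℝ) + 2 = n + 1 + 1 by ring,
    hHL (n + 1) (by positivity), hHL n (by exact_mod_cast hn)] at h
  simp only [shiftDefect, Nat.cast_succ]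
  rw [hHL (n + 1) (by positivity), hHL n (by exact_mod_cast hn)]
  linarith

theorem tendsto_shiftDefect_of_le_one (hHL : ∀ t > 0, H (t + 1) = L t + H t)
    (hH : NConvexOn 2 (Set.Ioi M) H) (hL : Tendsto (fun n : ℕ => L (n + 1) - L n) atTop (𝓝 0))
    {y : ℝ} (hy0 : 0 < y) (hy1 : y ≤ 1) : Tendsto (shiftDefect H L y) atTop (𝓝 0) := by
  rcases hy1.eq_or_lt with rfl | hy1
  · exact hL.congr fun n => (shiftDefect_one hHL n).symm
  have hlim := hL.const_mul (y * (1 + y) / 2)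
  rw [mul_zero] at hlim
  have hlarge : ∀ᶠ n : ℕ in atTop, 0 < n ∧ M < n :=
    (eventually_gt_atTop 0).and (tendsto_natCast_atTop_atTop.eventually_gt_atTop M)
  rw [← tendsto_add_atTop_iff_nat 1]
  refine tendsto_of_tendsto_of_tendsto_of_le_of_le' hlim (hlim.comp (tendsto_add_atTop_nat 1))
    (hlarge.mono fun n hn => le_shiftDefect_succ hHL hH hn.1 hn.2 hy0)
    (hlarge.mono fun n hn => ?_)
  simpa using shiftDefect_le hHL hH n.succ_pos (by push_cast; linarith [hn.2]) hy0 hy1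

theorem tendsto_shiftDefect (hHL : ∀ t > 0, H (t + 1) = L t + H t)
    (hH : NConvexOn 2 (Set.Ioi M) H) (hL : Tendsto (fun n : ℕ => L (n + 1) - L n) atTop (𝓝 0))
    {y : ℝ} (hy : 0 < y) : Tendsto (shiftDefect H L y) atTop (𝓝 0) := by
  suffices ∀ k : ℕ, ∀ y : ℝ, 0 < y → y ≤ k + 1 → Tendsto (shiftDefect H L y) atTop (𝓝 0) from
    this ⌈y⌉₊ y hy (by linarith [Nat.le_ceil y])
  intro k
  induction k with
  | zero => exact fun y hy0 hy1 => tendsto_shiftDefect_of_le_one hHL hH hL hy0 (by simpa using hy1)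
  | succ k ih =>
    intro y hy0 hy1
    rcases le_or_gt y 1 with hy | hy
    · exact tendsto_shiftDefect_of_le_one hHL hH hL hy0 hy
    have hprev := ih (y - 1) (by linarith) (by push_cast at hy1; linarith)
    have hsum := (hprev.comp (tendsto_add_atTop_nat 1)).add (hL.const_mul y)
    rw [mul_zero, add_zero] at hsum
    refine hsum.congr fun n => ?_
    simpa using (shiftDefect_add_one hHL (y - 1) n).symm

end shiftDefect

section FunctionalEquation

variable {f g : ℝ → ℝ}

theorem eq_prod_Icc_of_add_one (hfe : ∀ x > 0, f (x + 1) = g x * f x) (hf1 : f 1 = 1) (n : ℕ) :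
    f (n + 1) = ∏ k ∈ Icc 1 n, g k := by
  induction n with
  | zero => simpa using hf1
  | succ n ih =>
    rw [prod_Icc_succ_top (by omega), ← ih, Nat.cast_succ, hfe _ (by positivity), mul_comm]

theorem eq_mul_prod_range_of_add_one (hfe : ∀ x > 0, f (x + 1) = g x * f x) {x : ℝ} (hx : 0 < x)
    (n : ℕ) : f (x + n + 1) = f x * ∏ k ∈ range (n + 1), g (x + k) := by
  induction n with
  | zero => simp [hfe x hx, mul_comm]
  | succ n ih =>
    rw [prod_range_succ, ← mul_assoc, ← ih, Nat.cast_succ, ← add_assoc,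
      hfe _ (by positivity), mul_comm]

theorem gammaTypeSeq_eq_mul_exp (hg : ∀ x > 0, 0 < g x) (hf : ∀ x > 0, 0 < f x)
    (hfe : ∀ x > 0, f (x + 1) = g x * f x) (hf1 : f 1 = 1) {x : ℝ} (hx : 0 < x) {n : ℕ}
    (hn : 0 < n) :
    gammaTypeSeq g x n
      = f x * exp (-shiftDefect (fun t => log (f t)) (fun t => log (g t)) x n) := by
  have hfx := hf x hx
  have hexp : exp (-shiftDefect (fun t => log (f t)) (fun t => log (g t)) x n)
      = f (n + 1) * g n ^ x / f (x + n + 1) := by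
    rw [shiftDefect, show ∀ a b c : ℝ, -(a - b - x * c) = b + c * x - a by intros; ring,
      exp_sub, exp_add, exp_log (hf _ (by positivity)), exp_log (hf _ (by positivity)),
      ← rpow_def_of_pos (hg _ (by exact_mod_cast hn))]
  rw [gammaTypeSeq, hexp, ← eq_prod_Icc_of_add_one hfe hf1, eq_mul_prod_range_of_add_one hfe hx]
  field_simp

end FunctionalEquation

theorem le_liminf_of_second_order_logConvex (g f : ℝ → ℝ)
    (hg : ∀ x > 0, 0 < g x) (hf : ∀ x > 0, 0 < f x)
    (hseq : Tendsto (fun n : ℕ => g ((n : ℝ) + 1) / g n) atTop (nhds 1))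
    (hconv2 : ∃ M : ℝ, NConvexOn 2 (Set.Ioi M) (fun x => Real.log (f x)))
    (hfe : ∀ x > 0, f (x + 1) = g x * f x)
    (hf1 : f 1 = 1) :
    ∀ x > 0, f x ≤ Filter.liminf (fun n : ℕ => gammaTypeSeq g x n) atTop := by
  intro x hx
  obtain ⟨M, hM⟩ := hconv2
  have hstep : ∀ t > 0, log (f (t + 1)) = log (g t) + log (f t) := fun t ht => by
    rw [hfe t ht, log_mul (hg t ht).ne' (hf t ht).ne']
  have hlog_ratio : Tendsto (fun n : ℕ => log (g (n + 1)) - log (g n)) atTop (𝓝 0) := by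
    have h := (continuousAt_log one_ne_zero).tendsto.comp hseq
    rw [log_one] at h
    refine h.congr' ((eventually_gt_atTop 0).mono fun n hn => ?_)
    exact log_div (hg _ (by positivity)).ne' (hg _ (by exact_mod_cast hn)).ne'
  have hdefect := tendsto_shiftDefect hstep hM hlog_ratio hx
  have hlim : Tendsto (gammaTypeSeq g x) atTop (𝓝 (f x)) := by
    have h := tendsto_const_nhds (x := f x) |>.mul ((continuous_exp.tendsto _).comp hdefect.neg)
    rw [neg_zero, exp_zero, mul_one] at h
    exact h.congr' ((eventually_gt_atTop 0).mono fun n hn =>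
      (gammaTypeSeq_eq_mul_exp hg hf hfe hf1 hx hn).symm)
  exact hlim.liminf_eq.ge
end
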